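/- arXiv:1302.0368 — 6 statements merged into one kernel-verified Lean document; each statement's English description precedes it below -/
import Mathlib

section
/- Let G be a bipartite graph without isolated vertices. Then G is unmixed if and only if its vertices admit a partition V1 = {x_1,...,x_n}, V2 = {y_1,...,y_n} such that (1) x_i y_i is an edge for all i, and (2) whenever x_i y_j and x_j y_k are edges for distinct i, j, k, then x_i y_k is an edge. -/
set_option synthInstance.maxHeartbeats 1000000
set_option maxHeartbeats 1000000
open Classical
noncomputable section

/-- A (abstract) simplicial complex on vertex type `V`: a downward-closed
set of finite sets containing the empty set when nonempty is not required;
we only require downward closure. -/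
def IsComplex {V : Type} (Δ : Set (Finset V)) : Prop :=
  ∀ F ∈ Δ, ∀ G : Finset V, G ⊆ F → G ∈ Δ

/-- `F` is a facet (maximal face) of `Δ`. -/
def IsFacet {V : Type} (Δ : Set (Finset V)) (F : Finset V) : Prop :=
  F ∈ Δ ∧ ∀ G ∈ Δ, F ⊆ G → F = G

/-- A complex is pure if all facets have the same cardinality. -/
def IsPure {V : Type} (Δ : Set (Finset V)) : Prop :=
  ∀ F G : Finset V, IsFacet Δ F → IsFacet Δ G → F.card = G.card

/-- `Δ` has dimension `d - 1` iff the largest cardinality of a face is `d`. -/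
def HasDimCard {V : Type} [Fintype V] (Δ : Set (Finset V)) (d : ℕ) : Prop :=
  (∃ F ∈ Δ, F.card = d) ∧ ∀ F ∈ Δ, F.card ≤ d

/-- The link of a face `F` in `Δ`. -/
def linkC {V : Type} (Δ : Set (Finset V)) (F : Finset V) : Set (Finset V) :=
  { G | Disjoint G F ∧ G ∪ F ∈ Δ }

/-- The Stanley-Reisner ideal of `Δ` over `k`: generated by the monomials
supported on the non-faces of `Δ`. -/
def SRIdeal (k : Type) [Field k] {V : Type} [Fintype V] (Δ : Set (Finset V)) :
    Ideal (MvPolynomial V k) :=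
  Ideal.span { m | ∃ F : Finset V, F ∉ Δ ∧ m = ∏ v ∈ F, MvPolynomial.X v }

/-- The Stanley-Reisner ring `k[Δ]`. -/
abbrev SRRing (k : Type) [Field k] {V : Type} [Fintype V] (Δ : Set (Finset V)) :=
  MvPolynomial V k ⧸ SRIdeal k Δ

/-- `Δ` is Cohen-Macaulay over `k` iff its Stanley-Reisner ring admits a
regular sequence, contained in the irrelevant maximal ideal, whose length is
the Krull dimension of the ring (i.e. depth = dimension). -/
def IsCM (k : Type) [Field k] {V : Type} [Fintype V] (Δ : Set (Finset V)) : Prop :=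
  ∃ rs : List (SRRing k Δ),
    (∀ r ∈ rs, r ∈ Ideal.span
      (Set.range fun v : V => Ideal.Quotient.mk (SRIdeal k Δ) (MvPolynomial.X v))) ∧
    RingTheory.Sequence.IsRegular (SRRing k Δ) rs ∧
    (rs.length : WithBot (WithTop ℕ)) = ringKrullDim (SRRing k Δ)

/-- `Δ` is `CM_t` over `k`: pure, and the link of every face of cardinality
at least `t` is Cohen-Macaulay over `k`. -/
def IsCMt (k : Type) [Field k] {V : Type} [Fintype V] (Δ : Set (Finset V)) (t : ℕ) : Prop :=
  IsPure Δ ∧ ∀ F ∈ Δ, t ≤ F.card → IsCM k (linkC Δ F)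

/-- The independence complex of a graph. -/
def indC {V : Type} (G : SimpleGraph V) : Set (Finset V) :=
  { F | ∀ u ∈ F, ∀ v ∈ F, ¬ G.Adj u v }

/-- A graph is unmixed if its independence complex is pure. -/
def Unmixed {V : Type} (G : SimpleGraph V) : Prop := IsPure (indC G)

/-- The closed neighborhood `N[v]` of a vertex. -/
def closedNbhd {V : Type} (G : SimpleGraph V) (v : V) : Set V :=
  insert v (G.neighborSet v)

/-- The induced subgraph `G \ N[v]` on the complement of the closed
neighborhood of `v`. -/
def delNbhd {V : Type} (G : SimpleGraph V) (v : V) :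
    SimpleGraph ((closedNbhd G v)ᶜ : Set V) :=
  SimpleGraph.induce _ G

/-- A pure order of a bipartite graph `G`, given by labelings
`x y : Fin n → V` of the two parts. -/
def IsPureOrder {V : Type} (G : SimpleGraph V) {n : ℕ} (x y : Fin n → V) : Prop :=
  Function.Bijective (Sum.elim x y) ∧
  (∀ i j : Fin n, ¬ G.Adj (x i) (x j)) ∧
  (∀ i j : Fin n, ¬ G.Adj (y i) (y j)) ∧
  (∀ i : Fin n, G.Adj (x i) (y i)) ∧
  (∀ i j k : Fin n, i ≠ j → j ≠ k → i ≠ k →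
    G.Adj (x i) (y j) → G.Adj (x j) (y k) → G.Adj (x i) (y k))

noncomputable instance fintypeOfSetCompl {V : Type} [Fintype V] (s : Set V) : Fintype s :=
  s.toFinite.fintype

/-- The join of two simplicial complexes on disjoint vertex sets. -/
def joinC {V W : Type} (Δ : Set (Finset V)) (Δ' : Set (Finset W)) :
    Set (Finset (V ⊕ W)) :=
  { F | ∃ A ∈ Δ, ∃ B ∈ Δ',
      F = A.map ⟨Sum.inl, Sum.inl_injective⟩ ∪ B.map ⟨Sum.inr, Sum.inr_injective⟩ }

end

/- Given a pure order, the pairs `{xᵢ, yᵢ}` partition the vertices and are edges, so an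
independent set meets each pair at most once; the transitivity condition forces a maximal one to
meet every pair, so all facets have `n` elements. Conversely, without isolated vertices both
colour classes are facets, hence of the same size, and Hall's condition holds for the first one
because `S ∪ (B \ N(S))` is independent; the resulting perfect matching gives the labelling.
Transitivity then holds because a facet through `xᵢ` and `yₖ` avoids both `xⱼ` and `yⱼ`, so it
meets fewer than `n` pairs. -/

section IndependenceComplex

variable {V : Type} {G : SimpleGraph V}

theorem isFacet_indC_iff {F : Finset V} :
    IsFacet (indC G) F ↔ F ∈ indC G ∧ ∀ v ∉ F, ∃ u ∈ F, G.Adj v u := by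
  constructor
  · refine fun hF => ⟨hF.1, fun v hv => ?_⟩
    by_contra! hnadj
    have hins : insert v F ∈ indC G := by
      simp only [indC, Set.mem_ofPred_eq, Finset.mem_insert]
      rintro a (rfl | ha) b (rfl | hb)
      exacts [G.irrefl, hnadj b hb, fun h => hnadj a ha h.symm, hF.1 a ha b hb]
    exact hv (hF.2 _ hins (Finset.subset_insert v F) ▸ Finset.mem_insert_self v F)
  · rintro ⟨hF, hdom⟩
    refine ⟨hF, fun F' hF' hsub => Finset.Subset.antisymm hsub fun v hv => ?_⟩
    by_contra hvF
    obtain ⟨u, hu, hvu⟩ := hdom v hvF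
    exact hF' v hv u (hsub hu) hvu

variable [Fintype V]

theorem exists_isFacet_superset {I : Finset V} (hI : I ∈ indC G) :
    ∃ M, IsFacet (indC G) M ∧ I ⊆ M := by
  obtain ⟨M, ⟨hM, hIM⟩, hmax⟩ := Set.Finite.exists_maximalFor (fun M : Finset V => M.card)
    {M | M ∈ indC G ∧ I ⊆ M} (Set.toFinite _) ⟨I, hI, subset_rfl⟩
  refine ⟨M, ⟨hM, fun M' hM' hsub => ?_⟩, hIM⟩
  exact Finset.eq_of_subset_of_card_le hsub
    (hmax ⟨hM', hIM.trans hsub⟩ (Finset.card_le_card hsub))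

theorem Unmixed.card_le {F I : Finset V} (hG : Unmixed G) (hF : IsFacet (indC G) F)
    (hI : I ∈ indC G) : I.card ≤ F.card := by
  obtain ⟨M, hM, hIM⟩ := exists_isFacet_superset hI
  exact (Finset.card_le_card hIM).trans (hG M F hM hF).le

/-- Hall's condition, relative to a facet `B`, for independent sets avoiding `B`. -/
theorem Unmixed.card_le_card_adj {B S : Finset V} (hG : Unmixed G) (hB : IsFacet (indC G) B)
    (hS : S ∈ indC G) (hSB : Disjoint S B) :
    S.card ≤ (B.filter fun b => ∃ a ∈ S, G.Adj a b).card := by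
  set N := B.filter fun b => ∃ a ∈ S, G.Adj a b
  have hNB : N ⊆ B := Finset.filter_subset _ B
  -- `S ∪ (B \ N)` is independent, so it is no larger than the facet `B`.
  have hI : S ∪ (B \ N) ∈ indC G := by
    have hSN : ∀ a ∈ S, ∀ b ∈ B \ N, ¬ G.Adj a b := fun a ha b hb hab =>
      (Finset.mem_sdiff.1 hb).2 (Finset.mem_filter.2 ⟨(Finset.mem_sdiff.1 hb).1, a, ha, hab⟩)
    simp only [indC, Set.mem_ofPred_eq, Finset.mem_union]
    rintro a (ha | ha) b (hb | hb)
    exacts [hS a ha b hb, hSN a ha b hb, fun h => hSN b hb a ha h.symm,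
      hB.1 a (Finset.mem_sdiff.1 ha).1 b (Finset.mem_sdiff.1 hb).1]
  have hcard := hG.card_le hB hI
  rw [Finset.card_union_of_disjoint (hSB.mono_right Finset.sdiff_subset),
    Finset.card_sdiff_of_subset hNB] at hcard
  have := Finset.card_le_card hNB
  omega

theorem Unmixed.exists_injective_adj {A B : Finset V} (hG : Unmixed G)
    (hA : IsFacet (indC G) A) (hB : IsFacet (indC G) B) (hAB : Disjoint A B) :
    ∃ f : A → V, Function.Injective f ∧ ∀ a : A, f a ∈ B.filter (G.Adj a) := by
  refine (Finset.all_card_le_biUnion_card_iff_exists_injective _).1 fun s => ?_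
  have hsA : s.map (Function.Embedding.subtype _) ⊆ A := by
    intro v hv
    obtain ⟨a, -, rfl⟩ := Finset.mem_map.1 hv
    exact a.2
  have hS : s.map (Function.Embedding.subtype _) ∈ indC G :=
    fun u hu v hv => hA.1 u (hsA hu) v (hsA hv)
  refine (Finset.card_map _).symm.le.trans
    ((hG.card_le_card_adj hB hS (hAB.mono_left hsA)).trans (Finset.card_le_card ?_))
  intro b hb
  obtain ⟨hbB, v, hv, hvb⟩ := Finset.mem_filter.1 hb
  obtain ⟨a, ha, rfl⟩ := Finset.mem_map.1 hv
  exact Finset.mem_biUnion.2 ⟨a, ha, Finset.mem_filter.2 ⟨hbB, hvb⟩⟩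

end IndependenceComplex

section MatchedLabeling

variable {V ι : Type} [Fintype ι] {G : SimpleGraph V} {x y : ι → V}

theorem card_eq_card_filter_add_card_filter [Fintype V] (hbij : (Sum.elim x y).Bijective)
    (M : Finset V) :
    M.card = (Finset.univ.filter fun i => x i ∈ M).card +
      (Finset.univ.filter fun i => y i ∈ M).card := by
  calc M.card = ∑ v, if v ∈ M then 1 else 0 := by simp
    _ = ∑ s, if Sum.elim x y s ∈ M then 1 else 0 :=
      (hbij.sum_comp fun v => if v ∈ M then 1 else 0).symm
    _ = _ := by rw [Fintype.sum_sum_type, Finset.card_filter, Finset.card_filter]; rfl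

theorem card_eq_card_filter_of_mem_indC [Fintype V] (hbij : (Sum.elim x y).Bijective)
    (hxy : ∀ i, G.Adj (x i) (y i)) {M : Finset V} (hM : M ∈ indC G) :
    M.card = (Finset.univ.filter fun i => x i ∈ M ∨ y i ∈ M).card := by
  rw [card_eq_card_filter_add_card_filter hbij, Finset.filter_or, Finset.card_union_of_disjoint]
  exact Finset.disjoint_filter.2 fun i _ hx hy => hM _ hx _ hy (hxy i)

end MatchedLabeling

section PureOrder

variable {V : Type} [Fintype V] {G : SimpleGraph V} {n : ℕ} {x y : Fin n → V}

theorem IsPureOrder.card_eq_of_isFacet (h : IsPureOrder G x y) {M : Finset V}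
    (hM : IsFacet (indC G) M) : M.card = n := by
  obtain ⟨hbij, hxx, hyy, hxy, htrans⟩ := h
  have hmeet : ∀ l, x l ∈ M ∨ y l ∈ M := by
    intro l
    by_contra! ⟨hxl, hyl⟩
    obtain ⟨u, hu, hxu⟩ := (isFacet_indC_iff.1 hM).2 _ hxl
    obtain ⟨w, hw, hyw⟩ := (isFacet_indC_iff.1 hM).2 _ hyl
    obtain ⟨⟨j⟩ | ⟨j⟩, rfl⟩ := hbij.2 u
    · exact hxx _ _ hxu
    obtain ⟨⟨k⟩ | ⟨k⟩, rfl⟩ := hbij.2 w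
    swap
    · exact hyy _ _ hyw
    simp only [Sum.elim_inl, Sum.elim_inr] at hu hxu hw hyw
    have hjl : j ≠ l := by rintro rfl; exact hyl hu
    have hkl : k ≠ l := by rintro rfl; exact hxl hw
    refine hM.1 _ hw _ hu ?_
    by_cases hkj : k = j
    · exact hkj ▸ hxy k
    · exact htrans k l j hkl hjl.symm hkj hyw.symm hxu
  rw [card_eq_card_filter_of_mem_indC hbij hxy hM.1, Finset.filter_true_of_mem fun l _ => hmeet l,
    Finset.card_univ, Fintype.card_fin]

theorem Unmixed.isPureOrder (hG : Unmixed G) (hbij : (Sum.elim x y).Bijective)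
    (hxx : ∀ i j, ¬ G.Adj (x i) (x j)) (hyy : ∀ i j, ¬ G.Adj (y i) (y j))
    (hxy : ∀ i, G.Adj (x i) (y i)) : IsPureOrder G x y := by
  refine ⟨hbij, hxx, hyy, hxy, fun i j k _ _ _ hxiyj hxjyk => ?_⟩
  by_contra hxiyk
  have hX : IsFacet (indC G) (Finset.univ.image x) := by
    refine isFacet_indC_iff.2 ⟨?_, fun v hv => ?_⟩
    · simp only [indC, Set.mem_ofPred_eq, Finset.mem_image]
      rintro _ ⟨a, -, rfl⟩ _ ⟨b, -, rfl⟩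
      exact hxx a b
    obtain ⟨⟨l⟩ | ⟨l⟩, rfl⟩ := hbij.2 v
    · exact absurd (Finset.mem_image_of_mem x (Finset.mem_univ l)) hv
    · exact ⟨x l, Finset.mem_image_of_mem x (Finset.mem_univ l), (hxy l).symm⟩
  have hXcard : (Finset.univ.image x).card = n := by
    have hxinj : x.Injective := hbij.1.comp Sum.inl_injective
    simp [Finset.card_image_of_injective _ hxinj]
  have hpair : ({x i, y k} : Finset V) ∈ indC G := by
    simp only [indC, Set.mem_ofPred_eq, Finset.mem_insert, Finset.mem_singleton]
    rintro _ (rfl | rfl) _ (rfl | rfl)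
    exacts [G.irrefl, hxiyk, fun h => hxiyk h.symm, G.irrefl]
  obtain ⟨M, hM, hsub⟩ := exists_isFacet_superset hpair
  -- `M` meets neither `x j` (a neighbour of `y k`) nor `y j` (a neighbour of `x i`).
  have hmiss : (Finset.univ.filter fun l => x l ∈ M ∨ y l ∈ M) ⊆ Finset.univ.erase j := by
    intro l hl
    refine Finset.mem_erase.2 ⟨?_, Finset.mem_univ l⟩
    rintro rfl
    rcases (Finset.mem_filter.1 hl).2 with hxl | hyl
    · exact hM.1 _ hxl _ (hsub (by simp)) hxjyk
    · exact hM.1 _ (hsub (by simp)) _ hyl hxiyj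
  have hle := Finset.card_le_card hmiss
  rw [← card_eq_card_filter_of_mem_indC hbij hxy hM.1, hG M _ hM hX, hXcard,
    Finset.card_erase_of_mem (Finset.mem_univ j), Finset.card_univ, Fintype.card_fin] at hle
  have := j.pos
  omega

end PureOrder

section Bipartite

variable {V : Type} [Fintype V] {G : SimpleGraph V}

theorem isFacet_colorClass (c : G.Coloring (Fin 2)) (hiso : ∀ v, ∃ u, G.Adj v u) (i : Fin 2) :
    IsFacet (indC G) (Finset.univ.filter fun v => c v = i) := by
  refine isFacet_indC_iff.2 ⟨fun u hu v hv huv => ?_, fun v hv => ?_⟩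
  · exact c.valid huv ((Finset.mem_filter.1 hu).2.trans (Finset.mem_filter.1 hv).2.symm)
  obtain ⟨u, hvu⟩ := hiso v
  have hci : c v ≠ i := fun h => hv (Finset.mem_filter.2 ⟨Finset.mem_univ v, h⟩)
  have hcu : c u = i := by have := c.valid hvu; omega
  exact ⟨u, Finset.mem_filter.2 ⟨Finset.mem_univ u, hcu⟩, hvu⟩

theorem Unmixed.exists_matched_labeling (hG : Unmixed G) (c : G.Coloring (Fin 2))
    (hiso : ∀ v, ∃ u, G.Adj v u) :
    ∃ (n : ℕ) (x y : Fin n → V), (Sum.elim x y).Bijective ∧ (∀ i j, ¬ G.Adj (x i) (x j)) ∧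
      (∀ i j, ¬ G.Adj (y i) (y j)) ∧ ∀ i, G.Adj (x i) (y i) := by
  set A := Finset.univ.filter fun v => c v = 0
  set B := Finset.univ.filter fun v => c v = 1
  have hA := isFacet_colorClass c hiso 0
  have hB := isFacet_colorClass c hiso 1
  have hAB : Disjoint A B :=
    Finset.disjoint_filter.2 fun v _ h0 h1 => zero_ne_one (h0.symm.trans h1)
  obtain ⟨f, hfinj, hf⟩ := hG.exists_injective_adj hA hB hAB
  have hfB : ∀ a, f a ∈ B := fun a => (Finset.mem_filter.1 (hf a)).1
  let e := A.equivFin.symm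
  have hcard : Fintype.card V = A.card + B.card := by
    rw [← Finset.card_univ, Finset.card_eq_sum_card_fiberwise (f := c) (t := Finset.univ)
      fun _ _ => Finset.mem_univ _, Fin.sum_univ_two]
  refine ⟨A.card, fun i => e i, fun i => f (e i), ?_, fun i j => hA.1 _ (e i).2 _ (e j).2,
    fun i j => hB.1 _ (hfB _) _ (hfB _), fun i => (Finset.mem_filter.1 (hf _)).2⟩
  refine (Fintype.bijective_iff_injective_and_card _).2 ⟨?_, ?_⟩
  · exact (Subtype.val_injective.comp e.injective).sumElim (hfinj.comp e.injective)
      fun i j h => Finset.disjoint_left.1 hAB (e i).2 ((congrArg (· ∈ B) h).mpr (hfB _))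
  · rw [Fintype.card_sum, Fintype.card_fin, hcard, hG B A hB hA]

end Bipartite

theorem unmixed_bipartite_iff_pure_order_general {V : Type} [Fintype V]
    (G : SimpleGraph V) (hbip : G.Colorable 2) (hiso : ∀ v : V, ∃ u, G.Adj v u) :
    Unmixed G ↔ ∃ (n : ℕ) (x y : Fin n → V), IsPureOrder G x y := by
  constructor
  · intro hG
    obtain ⟨n, x, y, hbij, hxx, hyy, hxy⟩ := hG.exists_matched_labeling hbip.some hiso
    exact ⟨n, x, y, hG.isPureOrder hbij hxx hyy hxy⟩
  · rintro ⟨n, x, y, h⟩ F F' hF hF'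
    rw [h.card_eq_of_isFacet hF, h.card_eq_of_isFacet hF']

/-- Villarreal's characterization of unmixed bipartite graphs. -/
theorem unmixed_bipartite_iff_pure_order {V : Type} [Fintype V] [DecidableEq V]
    (G : SimpleGraph V) (hbip : G.Colorable 2) (hiso : ∀ v : V, ∃ u, G.Adj v u) :
    Unmixed G ↔ ∃ (n : ℕ) (x y : Fin n → V), IsPureOrder G x y :=
  unmixed_bipartite_iff_pure_order_general G hbip hiso
end

section
/- Let G be an unmixed bipartite graph with pure order of vertices ({x_1,...,x_d},{y_1,...,y_d}), and let K_{n,n} be a complete bipartite subgraph of G on ({x_{i_1},...,x_{i_n}},{y_{i_1},...,y_{i_n}}). If x_j y_{i_k} is an edge of G for some j and k, then x_j y_{i_l} is an edge of G for all l = 1,...,n. -/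
set_option synthInstance.maxHeartbeats 1000000
set_option maxHeartbeats 1000000
open Classical
/-- In an unmixed bipartite graph with a pure order, if `x j` is adjacent to one
`y`-vertex of a complete bipartite subgraph `K_{n,n}`, it is adjacent to all of them. -/
theorem adj_all_y_of_adj_one {V : Type} (G : SimpleGraph V) {d n : ℕ}
    (x y : Fin d → V) (hpo : IsPureOrder G x y)
    (ι : Fin n → Fin d) (hι : Function.Injective ι)
    (hK : ∀ p q : Fin n, G.Adj (x (ι p)) (y (ι q)))
    (j : Fin d) (p : Fin n) (h : G.Adj (x j) (y (ι p))) :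
    ∀ l : Fin n, G.Adj (x j) (y (ι l)) := by
  intro l
  by_cases hjl : j = ι l
  · subst hjl; exact hpo.2.2.2.1 (ι l)
  by_cases hjp : j = ι p
  · subst hjp; exact hK p l
  by_cases hpl : ι p = ι l
  · rw [← hpl]; exact h
  · exact hpo.2.2.2.2 j (ι p) (ι l) hjp hpl hjl h (hK p l)
end

section
/- Let G be an unmixed bipartite graph with pure order ({x_1,...,x_d},{y_1,...,y_d}), and let K_{n,n} be a complete bipartite subgraph of G on ({x_{i_1},...,x_{i_n}},{y_{i_1},...,y_{i_n}}). If x_{i_k} y_j is an edge of G for some k and j, then x_{i_l} y_j is an edge of G for all l = 1,...,n. -/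
set_option synthInstance.maxHeartbeats 1000000
set_option maxHeartbeats 1000000
open Classical
/-- In an unmixed bipartite graph with a pure order, if one `x`-vertex of a complete
bipartite subgraph `K_{n,n}` is adjacent to `y j`, then all of them are. -/
theorem adj_all_x_of_adj_one {V : Type} (G : SimpleGraph V) {d n : ℕ}
    (x y : Fin d → V) (hpo : IsPureOrder G x y)
    (ι : Fin n → Fin d) (hι : Function.Injective ι)
    (hK : ∀ p q : Fin n, G.Adj (x (ι p)) (y (ι q)))
    (p : Fin n) (j : Fin d) (h : G.Adj (x (ι p)) (y j)) :
    ∀ l : Fin n, G.Adj (x (ι l)) (y j) := by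
  intro l
  obtain ⟨hb, hxx, hyy, hloop, htr⟩ := hpo
  by_cases hlj : ι l = j
  · rw [← hlj]; exact hloop (ι l)
  by_cases hpj : ι p = j
  · rw [← hpj]; exact hK l p
  by_cases hlp : l = p
  · rw [hlp]; exact h
  exact htr (ι l) (ι p) j (fun e => hlp (hι e)) hpj hlj (hK l p) h
end

section
/- For a nonempty simplicial complex Δ and integer t ≥ 1, Δ is CM_t if and only if Δ is pure and the link of every vertex v of Δ is CM_{t-1}. -/
set_option synthInstance.maxHeartbeats 1000000
set_option maxHeartbeats 1000000
open Classical
lemma linkC_linkC {V : Type} (Δ : Set (Finset V)) (F G : Finset V) (h : Disjoint G F) :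
    linkC (linkC Δ F) G = linkC Δ (G ∪ F) := by
  ext H
  simp only [linkC, Set.mem_setOf_eq, Finset.disjoint_union_left, Finset.disjoint_union_right,
    Finset.union_assoc]
  tauto

lemma isPure_linkC {V : Type} {Δ : Set (Finset V)} (hp : IsPure Δ) (F : Finset V) :
    IsPure (linkC Δ F) := by
  have key : ∀ G, IsFacet (linkC Δ F) G → IsFacet Δ (G ∪ F) := by
    rintro G ⟨⟨hdis, hmem⟩, hmax⟩
    refine ⟨hmem, fun H hH hsub => ?_⟩
    have hFH : F ⊆ H := (Finset.union_subset_iff.mp hsub).2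
    have h1 : H \ F ∈ linkC Δ F :=
      ⟨Finset.sdiff_disjoint, by rwa [Finset.sdiff_union_of_subset hFH]⟩
    have h2 : G ⊆ H \ F := fun x hx =>
      Finset.mem_sdiff.mpr ⟨(Finset.union_subset_iff.mp hsub).1 hx,
        fun hxF => Finset.disjoint_left.mp hdis hx hxF⟩
    have hGH := hmax _ h1 h2
    rw [hGH, Finset.sdiff_union_of_subset hFH]
  intro G G' hG hG'
  have c1 := hp _ _ (key _ hG) (key _ hG')
  have d1 := hG.1.1; have d2 := hG'.1.1
  rw [Finset.card_union_of_disjoint d1, Finset.card_union_of_disjoint d2] at c1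
  omega

/-- A nonempty complex is `CM_t` (`t ≥ 1`) iff it is pure and the link of every
vertex is `CM_{t-1}`. -/
theorem isCMt_iff_links_isCMt (k : Type) [Field k] {V : Type} [Fintype V]
    (Δ : Set (Finset V)) (hΔ : IsComplex Δ) (hne : Δ.Nonempty)
    (t : ℕ) (ht : 1 ≤ t) :
    IsCMt k Δ t ↔
      (IsPure Δ ∧ ∀ v : V, ({v} : Finset V) ∈ Δ → IsCMt k (linkC Δ {v}) (t - 1)) := by
  constructor
  · rintro ⟨hp, hlinks⟩
    refine ⟨hp, fun v hv => ⟨isPure_linkC hp {v}, fun G hG hcard => ?_⟩⟩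
    have hdis : Disjoint G {v} := hG.1
    rw [linkC_linkC Δ {v} G hdis]
    apply hlinks _ hG.2
    rw [Finset.card_union_of_disjoint hdis, Finset.card_singleton]
    omega
  · rintro ⟨hp, hlinks⟩
    refine ⟨hp, fun F hF hcard => ?_⟩
    obtain ⟨v, hv⟩ : F.Nonempty := Finset.card_pos.mp (by omega)
    have hvΔ : ({v} : Finset V) ∈ Δ := hΔ F hF {v} (Finset.singleton_subset_iff.mpr hv)
    obtain ⟨hpl, hl⟩ := hlinks v hvΔ
    have hG : F.erase v ∈ linkC Δ {v} := by
      refine ⟨Finset.disjoint_singleton_right.mpr (Finset.notMem_erase v F), ?_⟩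
      rw [Finset.union_comm, ← Finset.insert_eq, Finset.insert_erase hv]
      exact hF
    have hcard' : t - 1 ≤ (F.erase v).card := by
      rw [Finset.card_erase_of_mem hv]; omega
    have := hl (F.erase v) hG hcard'
    rwa [linkC_linkC Δ {v} _ hG.1, Finset.union_comm, ← Finset.insert_eq,
      Finset.insert_erase hv] at this
end

section
/- If an unmixed bipartite graph G has a cross in some pure ordering of its vertices, then it has a cross in every pure ordering of its vertices. -/
set_option synthInstance.maxHeartbeats 1000000
set_option maxHeartbeats 1000000
open Classical
/-- If an unmixed bipartite graph has a cross in some pure order, then it has a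
cross in every pure order. -/
theorem cross_in_every_pure_order {V : Type} (G : SimpleGraph V) (hunm : Unmixed G)
    {n m : ℕ} (x y : Fin n → V) (x' y' : Fin m → V)
    (h1 : IsPureOrder G x y) (h2 : IsPureOrder G x' y')
    (hcross : ∃ i j : Fin n, i ≠ j ∧ G.Adj (x i) (y j) ∧ G.Adj (x j) (y i)) :
    ∃ i j : Fin m, i ≠ j ∧ G.Adj (x' i) (y' j) ∧ G.Adj (x' j) (y' i) := by
  classical
  by_contra hc
  push_neg at hc
  obtain ⟨i0, j0, hij0, e1a, e1b⟩ := hcross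
  obtain ⟨hbij1, hxx1, hyy1, hm1, htr1⟩ := h1
  obtain ⟨hbij2, hxx2, hyy2, hm2, htr2⟩ := h2
  -- injectivity facts
  have hx'inj : Function.Injective x' := by
    intro a b h
    have : (Sum.inl a : Fin m ⊕ Fin m) = Sum.inl b :=
      hbij2.injective (show Sum.elim x' y' (Sum.inl a) = Sum.elim x' y' (Sum.inl b) from h)
    simpa using this
  have hxinj : Function.Injective x := by
    intro a b h
    have : (Sum.inl a : Fin n ⊕ Fin n) = Sum.inl b :=
      hbij1.injective (show Sum.elim x y (Sum.inl a) = Sum.elim x y (Sum.inl b) from h)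
    simpa using this
  -- the partial order from the second (cross-free) order
  set le2 : Fin m → Fin m → Prop := fun a b => a = b ∨ G.Adj (x' a) (y' b) with hle2def
  have le2_trans : ∀ a b c, le2 a b → le2 b c → le2 a c := by
    intro a b c hab hbc
    rcases hab with rfl | hab
    · exact hbc
    rcases hbc with rfl | hbc
    · exact Or.inr hab
    by_cases hab' : a = b
    · subst hab'; exact Or.inr hbc
    by_cases hbc' : b = c
    · subst hbc'; exact Or.inr hab
    by_cases hac : a = c
    · exact Or.inl hac
    · exact Or.inr (htr2 a b c hab' hbc' hac hab hbc)
  have le2_antisymm : ∀ a b, le2 a b → le2 b a → a = b := by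
    intro a b hab hba
    rcases hab with rfl | hab
    · rfl
    rcases hba with rfl | hba
    · rfl
    by_cases h : a = b
    · exact h
    · exact absurd hba (hc a b h hab)
  -- equivalences
  set e1 : (Fin n ⊕ Fin n) ≃ V := Equiv.ofBijective _ hbij1 with he1
  set e2 : (Fin m ⊕ Fin m) ≃ V := Equiv.ofBijective _ hbij2 with he2
  have he1x : ∀ i, e1 (Sum.inl i) = x i := fun i => rfl
  have he1y : ∀ i, e1 (Sum.inr i) = y i := fun i => rfl
  have he2x : ∀ a, e2 (Sum.inl a) = x' a := fun a => rfl
  have he2y : ∀ a, e2 (Sum.inr a) = y' a := fun a => rfl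
  -- partner in the first order
  set partner : V → V := fun v => Sum.elim y x (e1.symm v) with hpdef
  have hpx1 : ∀ i, partner (x i) = y i := by
    intro i
    have : e1.symm (x i) = Sum.inl i := by
      rw [Equiv.symm_apply_eq]; rfl
    simp [hpdef, this]
  have hpy1 : ∀ i, partner (y i) = x i := by
    intro i
    have : e1.symm (y i) = Sum.inr i := by
      rw [Equiv.symm_apply_eq]; rfl
    simp [hpdef, this]
  have hpadj : ∀ v, G.Adj v (partner v) := by
    intro v
    rcases hs : e1.symm v with i | i
    · have hv : v = x i := by
        have := congrArg e1 hs; rwa [Equiv.apply_symm_apply] at this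
      rw [hv, hpx1]; exact hm1 i
    · have hv : v = y i := by
        have := congrArg e1 hs; rwa [Equiv.apply_symm_apply] at this
      rw [hv, hpy1]; exact (hm1 i).symm
  have hpp : ∀ v, partner (partner v) = v := by
    intro v
    rcases hs : e1.symm v with i | i
    · have hv : v = x i := by
        have := congrArg e1 hs; rwa [Equiv.apply_symm_apply] at this
      rw [hv, hpx1, hpy1]
    · have hv : v = y i := by
        have := congrArg e1 hs; rwa [Equiv.apply_symm_apply] at this
      rw [hv, hpy1, hpx1]
  -- partner of an x' vertex is a y' vertex
  have hφ' : ∀ a : Fin m, ∃ b, partner (x' a) = y' b := by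
    intro a
    rcases hs : e2.symm (partner (x' a)) with b | b
    · exfalso
      have hv : partner (x' a) = x' b := by
        have := congrArg e2 hs; rwa [Equiv.apply_symm_apply] at this
      have := hpadj (x' a)
      rw [hv] at this
      exact hxx2 a b this
    · have hv : partner (x' a) = y' b := by
        have := congrArg e2 hs; rwa [Equiv.apply_symm_apply] at this
      exact ⟨b, hv⟩
  choose φ hφ using hφ'
  have hφinj : Function.Injective φ := by
    intro a a' h
    have h2' : partner (x' a) = partner (x' a') := by rw [hφ a, hφ a', h]
    have := congrArg partner h2'
    rw [hpp, hpp] at this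
    exact hx'inj this
  have hle : ∀ a, le2 a (φ a) := by
    intro a
    have := hpadj (x' a)
    rw [hφ a] at this
    exact Or.inr this
  have hchain : ∀ k a, le2 a (φ^[k] a) := by
    intro k
    induction k with
    | zero => intro a; exact Or.inl rfl
    | succ k ih =>
        intro a
        rw [Function.iterate_succ_apply']
        exact le2_trans _ _ _ (ih a) (hle (φ^[k] a))
  -- φ is the identity
  have hφbij : Function.Bijective φ := Finite.injective_iff_bijective.mp hφinj
  set ψ : Equiv.Perm (Fin m) := Equiv.ofBijective φ hφbij with hψ
  have hψφ : ∀ j a, (ψ ^ j) a = φ^[j] a := by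
    intro j
    induction j with
    | zero => intro a; simp
    | succ j ih =>
        intro a
        rw [pow_succ, Function.iterate_succ_apply]
        exact ih (φ a)
  have hfix : ∀ a, φ a = a := by
    intro a
    have hk1 : (ψ ^ orderOf ψ) a = a := by rw [pow_orderOf_eq_one]; rfl
    have hkpos : 0 < orderOf ψ := orderOf_pos ψ
    have h2' : le2 (φ a) a := by
      have h3 := hchain (orderOf ψ - 1) (φ a)
      have h5 : (orderOf ψ - 1) + 1 = orderOf ψ := by omega
      rw [← Function.iterate_succ_apply] at h3
      simp only [Nat.succ_eq_add_one] at h3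
      rw [h5, ← hψφ, hk1] at h3
      exact h3
    exact (le2_antisymm _ _ (hle a) h2').symm
  have hpx2 : ∀ a, partner (x' a) = y' a := by
    intro a; rw [hφ a, hfix]
  have hpy2 : ∀ a, partner (y' a) = x' a := by
    intro a
    have := congrArg partner (hpx2 a)
    rw [hpp] at this
    exact this.symm
  -- classify x i0 and x j0
  have classify : ∀ i : Fin n, (∃ a, x i = x' a ∧ y i = y' a) ∨ (∃ a, x i = y' a ∧ y i = x' a) := by
    intro i
    rcases hs : e2.symm (x i) with a | a
    · left
      have hv : x i = x' a := by
        have := congrArg e2 hs; rwa [Equiv.apply_symm_apply] at this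
      refine ⟨a, hv, ?_⟩
      rw [← hpx1 i, hv, hpx2]
    · right
      have hv : x i = y' a := by
        have := congrArg e2 hs; rwa [Equiv.apply_symm_apply] at this
      refine ⟨a, hv, ?_⟩
      rw [← hpx1 i, hv, hpy2]
  rcases classify i0 with ⟨a, hxa, hya⟩ | ⟨a, hxa, hya⟩ <;>
    rcases classify j0 with ⟨b, hxb, hyb⟩ | ⟨b, hxb, hyb⟩
  · have hab : a ≠ b := fun h => hij0 (hxinj (by rw [hxa, hxb, h]))
    rw [hxa, hyb] at e1a
    rw [hxb, hya] at e1b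
    exact hc a b hab e1a e1b
  · rw [hxa, hyb] at e1a
    exact hxx2 a b e1a
  · rw [hxa, hyb] at e1a
    exact hyy2 a b e1a
  · have hab : a ≠ b := fun h => hij0 (hxinj (by rw [hxa, hxb, h]))
    rw [hxa, hyb] at e1a
    rw [hxb, hya] at e1b
    exact hc a b hab e1b.symm e1a.symm
end

section
/- Let G be an unmixed bipartite graph with pure order on V = {x_1,...,x_d}, W = {y_1,...,y_d}, and let n_1,...,n_d be positive integers. Then the graph G' = G(n_1,...,n_d), obtained by replacing each perfect matching edge x_i y_i with the complete bipartite graph K_{n_i,n_i} while preserving all other adjacencies, is also unmixed. -/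
/-! `replaceGraph G x y nn` is the pullback of `G` along `replaceProj`, which sends the copies
`x_{ik}`, `y_{ik}` to `x i`, `y i`; the complete bipartite blocks come from the matching edges
`x i y i`. Facets of the independence complex of a pullback along a surjection are the preimages
of facets, so a facet lying over the facet `A` of `G` has `∑_{v ∈ A} |fibre of v|` elements.
Since `{x i}` is a facet and `G` is unmixed, `A` has `d` elements; as it contains at most one end
of each matching edge, it contains exactly one, and the count is `∑ i, nn i`. -/

set_option synthInstance.maxHeartbeats 1000000
set_option maxHeartbeats 1000000
open Classical
/-- The graph obtained from `G` by replacing each perfect matching edge `x i y i`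
of a pure order by a complete bipartite graph `K_{n i, n i}`, preserving all other
adjacencies: vertex `x_{i,p}` is adjacent to `y_{j,q}` iff `i = j` (the new
complete bipartite block) or `x i` is adjacent to `y j` in `G`. -/
def replaceGraph {V : Type} (G : SimpleGraph V) {d : ℕ} (x y : Fin d → V)
    (nn : Fin d → ℕ) :
    SimpleGraph ((Σ i : Fin d, Fin (nn i)) ⊕ (Σ i : Fin d, Fin (nn i))) where
  Adj a b :=
    match a, b with
    | .inl p, .inr q => p.1 = q.1 ∨ G.Adj (x p.1) (y q.1)
    | .inr q, .inl p => p.1 = q.1 ∨ G.Adj (x p.1) (y q.1)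
    | _, _ => False
  symm := ⟨by rintro (p | p) (q | q) h <;> simp_all⟩
  loopless := ⟨by rintro (p | p) h <;> simp_all⟩

open Finset

section Pullback

variable {V W : Type} {G : SimpleGraph V} {π : W → V}

theorem image_mem_indC_comap {F : Finset W} (hF : F ∈ indC (G.comap π)) :
    F.image π ∈ indC G := by
  intro u hu v hv
  obtain ⟨a, ha, rfl⟩ := mem_image.1 hu
  obtain ⟨b, hb, rfl⟩ := mem_image.1 hv
  exact hF a ha b hb

theorem filter_mem_indC_comap [Fintype W] {A : Finset V} (hA : A ∈ indC G) :
    univ.filter (fun w => π w ∈ A) ∈ indC (G.comap π) := by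
  intro u hu v hv
  simp only [mem_filter, mem_univ, true_and] at hu hv
  exact hA _ hu _ hv

theorem IsFacet.eq_filter_image_of_comap [Fintype W] {F : Finset W}
    (hF : IsFacet (indC (G.comap π)) F) : F = univ.filter (fun w => π w ∈ F.image π) :=
  hF.2 _ (filter_mem_indC_comap (image_mem_indC_comap hF.1)) fun w hw => by
    simpa using mem_image_of_mem π hw

theorem IsFacet.image_of_comap [Fintype W] (hπ : Function.Surjective π) {F : Finset W}
    (hF : IsFacet (indC (G.comap π)) F) : IsFacet (indC G) (F.image π) := by
  refine ⟨image_mem_indC_comap hF.1, fun B hB hFB => hFB.antisymm fun b hb => ?_⟩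
  have hF_eq : F = univ.filter (fun w => π w ∈ B) :=
    hF.2 _ (filter_mem_indC_comap hB) fun w hw => by simpa using hFB (mem_image_of_mem π hw)
  obtain ⟨w, rfl⟩ := hπ b
  exact mem_image_of_mem π (hF_eq ▸ by simpa using hb)

end Pullback

section PerfectMatching

variable {V : Type} {G : SimpleGraph V} {d : ℕ} {x y : Fin d → V}

theorem card_eq_sum_ite_mem [Fintype V] (hxy : Function.Bijective (Sum.elim x y))
    (A : Finset V) :
    A.card = ∑ i, ((if x i ∈ A then 1 else 0) + (if y i ∈ A then 1 else 0)) := by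
  calc A.card = ∑ v, if v ∈ A then 1 else 0 := by simp
    _ = ∑ u : Fin d ⊕ Fin d, if Sum.elim x y u ∈ A then 1 else 0 :=
      (hxy.sum_comp fun v => if v ∈ A then 1 else 0).symm
    _ = _ := by rw [Fintype.sum_sum_type, ← sum_add_distrib]; rfl

theorem isFacet_image_left (hxy : Function.Bijective (Sum.elim x y))
    (hxx : ∀ i j, ¬ G.Adj (x i) (x j)) (hmatch : ∀ i, G.Adj (x i) (y i)) :
    IsFacet (indC G) (univ.image x) := by
  refine ⟨by simpa [indC] using hxx, fun B hB hXB => hXB.antisymm fun b hb => ?_⟩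
  obtain ⟨i | i, rfl⟩ := hxy.2 b
  · exact mem_image_of_mem x (mem_univ i)
  · exact absurd (hmatch i) (hB _ (hXB (mem_image_of_mem x (mem_univ i))) _ hb)

theorem Unmixed.card_eq_of_isFacet (hG : Unmixed G) (hxy : Function.Bijective (Sum.elim x y))
    (hxx : ∀ i j, ¬ G.Adj (x i) (x j)) (hmatch : ∀ i, G.Adj (x i) (y i))
    {A : Finset V} (hA : IsFacet (indC G) A) : A.card = d := by
  rw [hG _ _ hA (isFacet_image_left hxy hxx hmatch),
    card_image_of_injective (f := x) _ fun i j h => Sum.inl_injective (hxy.1 h), card_univ,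
    Fintype.card_fin]

theorem Unmixed.ite_mem_add_ite_mem_eq_one [Fintype V] (hG : Unmixed G)
    (hxy : Function.Bijective (Sum.elim x y))
    (hxx : ∀ i j, ¬ G.Adj (x i) (x j)) (hmatch : ∀ i, G.Adj (x i) (y i))
    {A : Finset V} (hA : IsFacet (indC G) A) (i : Fin d) :
    (if x i ∈ A then 1 else 0) + (if y i ∈ A then 1 else 0) = 1 := by
  have hle : ∀ j ∈ (univ : Finset (Fin d)),
      (if x j ∈ A then 1 else 0) + (if y j ∈ A then 1 else 0) ≤ 1 := by
    intro j _
    split_ifs with hx hy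
    exacts [absurd (hmatch j) (hA.1 _ hx _ hy), le_rfl, le_rfl, zero_le_one]
  have hsum :
      ∑ j, ((if x j ∈ A then 1 else 0) + (if y j ∈ A then 1 else 0)) = ∑ _j : Fin d, 1 := by
    rw [← card_eq_sum_ite_mem hxy A, hG.card_eq_of_isFacet hxy hxx hmatch hA, sum_const,
      card_univ, Fintype.card_fin, smul_eq_mul, mul_one]
  exact (sum_eq_sum_iff_of_le hle).1 hsum i (mem_univ i)

end PerfectMatching

section ReplaceGraph

variable {V : Type} {G : SimpleGraph V} {d : ℕ} {x y : Fin d → V} {nn : Fin d → ℕ}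

def replaceProj (x y : Fin d → V) (nn : Fin d → ℕ) :
    (Σ i : Fin d, Fin (nn i)) ⊕ (Σ i : Fin d, Fin (nn i)) → V :=
  Sum.elim (x ∘ Sigma.fst) (y ∘ Sigma.fst)

theorem replaceGraph_eq_comap (hxx : ∀ i j, ¬ G.Adj (x i) (x j))
    (hyy : ∀ i j, ¬ G.Adj (y i) (y j)) (hmatch : ∀ i, G.Adj (x i) (y i)) :
    replaceGraph G x y nn = G.comap (replaceProj x y nn) := by
  have hblock : ∀ i j, i = j ∨ G.Adj (x i) (y j) ↔ G.Adj (x i) (y j) :=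
    fun i j => or_iff_right_of_imp fun h => h ▸ hmatch i
  ext (p | p) (q | q)
  · simpa [replaceGraph, replaceProj] using hxx p.1 q.1
  · simpa [replaceGraph, replaceProj] using hblock p.1 q.1
  · simpa [replaceGraph, replaceProj, G.adj_comm (y p.1)] using hblock q.1 p.1
  · simpa [replaceGraph, replaceProj] using hyy p.1 q.1

theorem replaceProj_surjective (hxy : Function.Surjective (Sum.elim x y))
    (hpos : ∀ i, 0 < nn i) : Function.Surjective (replaceProj x y nn) := by
  intro v
  obtain ⟨i | i, rfl⟩ := hxy v
  · exact ⟨.inl ⟨i, ⟨0, hpos i⟩⟩, rfl⟩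
  · exact ⟨.inr ⟨i, ⟨0, hpos i⟩⟩, rfl⟩

theorem card_filter_replaceProj_mem [Fintype V] (A : Finset V) :
    (univ.filter fun w => replaceProj x y nn w ∈ A).card =
      ∑ i, (nn i * (if x i ∈ A then 1 else 0) + nn i * (if y i ∈ A then 1 else 0)) := by
  rw [card_filter, Fintype.sum_sum_type, Fintype.sum_sigma, Fintype.sum_sigma, ← sum_add_distrib]
  refine sum_congr rfl fun i _ => ?_
  congr 1 <;> split_ifs <;> simp [replaceProj, *]

end ReplaceGraph

/-- Replacing the perfect matching edges of a pure order of an unmixed bipartite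
graph by complete bipartite graphs yields an unmixed graph. -/
theorem replaceGraph_unmixed {V : Type} [Fintype V] (G : SimpleGraph V)
    (hunm : Unmixed G) {d : ℕ} (x y : Fin d → V) (hpo : IsPureOrder G x y)
    (nn : Fin d → ℕ) (hpos : ∀ i, 0 < nn i) :
    Unmixed (replaceGraph G x y nn) := by
  obtain ⟨hxy, hxx, hyy, hmatch, -⟩ := hpo
  rw [Unmixed, replaceGraph_eq_comap hxx hyy hmatch]
  suffices h : ∀ F, IsFacet (indC (G.comap (replaceProj x y nn))) F → F.card = ∑ i, nn i from
    fun F F' hF hF' => (h F hF).trans (h F' hF').symm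
  intro F hF
  have hA := hF.image_of_comap (replaceProj_surjective hxy.2 hpos)
  rw [hF.eq_filter_image_of_comap, card_filter_replaceProj_mem]
  refine sum_congr rfl fun i _ => ?_
  rw [← mul_add, hunm.ite_mem_add_ite_mem_eq_one hxy hxx hmatch hA i, mul_one]
end
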